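/- Let G be a graph, O a fourientation of G, u ≠ v vertices, P₁ a potential path of O from v to u, and P₂ a potential path of O from u to v. Then for every edge e that is oriented in O and appears in the closed walk P₁P₂, there exists a potential cycle Cy of O with e ∈ Cy and Cy contained in the edge set of P₁P₂. Moreover, if a bioriented edge e′ appears in Cy, then the orientation of e′ consistent with the direction of Cy is consistent with the direction of at least one of P₁, P₂. -/

import Mathlib

open scoped Classical

/-- A multigraph with a fixed reference orientation: each edge `e` has a
source `src e` and a target `tgt e` (the positive direction `e⁺ = (src e, tgt e)`). -/
structure MGraph (V E : Type) where
  src : E → V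
  tgt : E → V

namespace MGraph

variable {V E : Type} (G : MGraph V E)

/-- Two vertices are joined by some edge of `S`. -/
def step (S : Set E) (a b : V) : Prop :=
  ∃ e ∈ S, (G.src e = a ∧ G.tgt e = b) ∨ (G.src e = b ∧ G.tgt e = a)

/-- `κ(S)`: the number of connected components of the spanning subgraph `(V, S)`. -/
noncomputable def kappa (S : Set E) : ℕ :=
  Nat.card (Quot (G.step S))

/-- A cut of `G`: a minimal nonempty edge set whose removal increases the
number of connected components. -/
def IsCut (C : Set E) : Prop :=
  C.Nonempty ∧ G.kappa Cᶜ > G.kappa Set.univ ∧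
    ∀ C' : Set E, C' ⊂ C → C'.Nonempty → ¬ (G.kappa C'ᶜ > G.kappa Set.univ)

/-- A cycle of `G`: a minimal nonempty edge set meeting no cut of `G` in
precisely one element. -/
def IsCycle (C : Set E) : Prop :=
  C.Nonempty ∧ (∀ Cu : Set E, G.IsCut Cu → (Cu ∩ C).ncard ≠ 1) ∧
    ∀ C' : Set E, C' ⊂ C → C'.Nonempty →
      ¬ (∀ Cu : Set E, G.IsCut Cu → (Cu ∩ C').ncard ≠ 1)

/-- Head of edge `e` under orientation `O` (`O e = true` means the reference
direction `src e → tgt e`). -/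
def ohead (O : E → Bool) (e : E) : V := if O e then G.tgt e else G.src e

/-- Tail of edge `e` under orientation `O`. -/
def otail (O : E → Bool) (e : E) : V := if O e then G.src e else G.tgt e

/-- Edge `e` crosses the vertex set `U` (exactly one endpoint in `U`). -/
def crossing (U : Set V) (e : E) : Prop := G.src e ∈ U ↔ G.tgt e ∉ U

/-- A directed cut of the orientation `O`: a cut all of whose edges are
oriented consistently out of some vertex set `U`. -/
def IsDirCut (O : E → Bool) (C : Set E) : Prop :=
  G.IsCut C ∧ ∃ U : Set V, (∀ e, e ∈ C ↔ G.crossing U e) ∧ ∀ e ∈ C, G.otail O e ∈ U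

/-- A directed cycle of the orientation `O`: a cycle oriented consistently,
i.e. in-degree equals out-degree at each vertex within the cycle. -/
def IsDirCycle (O : E → Bool) (C : Set E) : Prop :=
  G.IsCycle C ∧ ∀ v : V,
    {e ∈ C | G.ohead O e = v}.ncard = {e ∈ C | G.otail O e = v}.ncard

section Activities

variable [LinearOrder E]

/-- `Î(S)`: cut active edges of the spanning subgraph `S`. -/
def Iact (S : Set E) : Set E :=
  {e | ∃ C : Set E, G.IsCut C ∧ e ∈ C ∧ (∀ f ∈ C, f ≠ e → f ∉ S) ∧ ∀ f ∈ C, e ≤ f}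

/-- `L̂(S)`: cycle active edges of the spanning subgraph `S`. -/
def Lact (S : Set E) : Set E :=
  {e | ∃ C : Set E, G.IsCycle C ∧ e ∈ C ∧ (∀ f ∈ C, f = e ∨ f ∈ S) ∧ ∀ f ∈ C, e ≤ f}

/-- `I(O)`: cut active edges of the orientation `O`. -/
def Ior (O : E → Bool) : Set E :=
  {e | ∃ C : Set E, G.IsDirCut O C ∧ e ∈ C ∧ ∀ f ∈ C, e ≤ f}

/-- `L(O)`: cycle active edges of the orientation `O`. -/
def Lor (O : E → Bool) : Set E :=
  {e | ∃ C : Set E, G.IsDirCycle O C ∧ e ∈ C ∧ ∀ f ∈ C, e ≤ f}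

end Activities

/-- The Tutte polynomial via the corank-nullity expansion, evaluated in a
commutative ring. -/
noncomputable def tutte [Fintype V] [Fintype E] (R : Type) [CommRing R] (x y : R) : R :=
  ∑ S : Finset E, (x - 1) ^ (G.kappa ↑S - G.kappa Set.univ) *
    (y - 1) ^ (S.card + G.kappa ↑S - Fintype.card V)

/-! ### Fourientations.
A fourientation is `F : E → Bool × Bool`, recording whether `e⁺` resp. `e⁻`
belongs to the fourientation. -/

/-- A potential cut of the fourientation `F`: a directed cut each of whose
edges is unoriented in `F` or oriented in the cut direction (out of `U`). -/
def PotCut (F : E → Bool × Bool) (C : Set E) : Prop :=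
  G.IsCut C ∧ ∃ U : Set V, (∀ e, e ∈ C ↔ G.crossing U e) ∧
    ∀ e ∈ C, (G.src e ∈ U → (F e).2 = false) ∧ (G.src e ∉ U → (F e).1 = false)

/-- A potential cycle of the fourientation `F`, with cyclic direction `dir`:
a consistently directed cycle each of whose edges has its `dir`-direction
present in `F` (so each edge is bioriented or oriented in the cycle direction). -/
def PotCycle (F : E → Bool × Bool) (C : Set E) (dir : E → Bool) : Prop :=
  G.IsCycle C ∧
    (∀ v : V, {e ∈ C | G.ohead dir e = v}.ncard = {e ∈ C | G.otail dir e = v}.ncard) ∧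
    ∀ e ∈ C, (if dir e then (F e).1 else (F e).2) = true

/-- Add the direction `d` of edge `e` to the fourientation `F`. -/
def addDir [DecidableEq E] (F : E → Bool × Bool) (e : E) (d : Bool) : E → Bool × Bool :=
  Function.update F e (if d then (true, (F e).2) else ((F e).1, true))

/-- Remove the direction `d` of edge `e` from the fourientation `F`. -/
def remDir [DecidableEq E] (F : E → Bool × Bool) (e : E) (d : Bool) : E → Bool × Bool :=
  Function.update F e (if d then (false, (F e).2) else ((F e).1, false))

/-- `ᵉO`: toggle the status of the edge `e` in the fourientation `F`. -/
def toggle [DecidableEq E] (F : E → Bool × Bool) (e : E) : E → Bool × Bool :=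
  Function.update F e ((F e).2, (F e).1)

section FourActivities

variable [LinearOrder E]

/-- `I^o(O)`: oriented edges that are minimal in some potential cut. -/
def Io (F : E → Bool × Bool) : Set E :=
  {f | (F f).1 ≠ (F f).2 ∧ ∃ C : Set E, G.PotCut F C ∧ f ∈ C ∧ ∀ g ∈ C, f ≤ g}

/-- `L^o(O)`: oriented edges that are minimal in some potential cycle. -/
def Lo (F : E → Bool × Bool) : Set E :=
  {f | (F f).1 ≠ (F f).2 ∧
    ∃ (C : Set E) (dir : E → Bool), G.PotCycle F C dir ∧ f ∈ C ∧ ∀ g ∈ C, f ≤ g}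

/-- `I^u(O)`: unoriented edges `f` minimal in some potential cut of
`O ∪ {f^{σᵤ(f)}}`. -/
def Iu (σu : E → Bool) (F : E → Bool × Bool) : Set E :=
  {f | F f = (false, false) ∧
    ∃ C : Set E, G.PotCut (addDir F f (σu f)) C ∧ f ∈ C ∧ ∀ g ∈ C, f ≤ g}

/-- `L^b(O)`: bioriented edges `f` minimal in some potential cycle of
`O \ {f^{σ_b(f)}}`. -/
def Lb (σb : E → Bool) (F : E → Bool × Bool) : Set E :=
  {f | F f = (true, true) ∧
    ∃ (C : Set E) (dir : E → Bool),
      G.PotCycle (remDir F f (σb f)) C dir ∧ f ∈ C ∧ ∀ g ∈ C, f ≤ g}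

end FourActivities

/-- The deletion `G − e`. -/
def del (e : E) : MGraph V {f : E // f ≠ e} :=
  ⟨fun f => G.src f.1, fun f => G.tgt f.1⟩

/-- The contraction `G/e`: identify the endpoints of `e` and remove `e`. -/
def contr (e : E) : MGraph (Quot (fun a b => a = G.src e ∧ b = G.tgt e)) {f : E // f ≠ e} :=
  ⟨fun f => Quot.mk _ (G.src f.1), fun f => Quot.mk _ (G.tgt f.1)⟩

/-! ### Potential walks in a fourientation. A walk step is a pair `(e, d)` of an
edge and a chosen direction (`d = true` for the reference direction). -/

/-- Tail of the directed edge `(e, d)`. -/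
def ftail (p : E × Bool) : V := if p.2 then G.src p.1 else G.tgt p.1

/-- Head of the directed edge `(e, d)`. -/
def fhead (p : E × Bool) : V := if p.2 then G.tgt p.1 else G.src p.1

/-- The direction `d` of `e` is present in the fourientation `F`. -/
def present (F : E → Bool × Bool) (p : E × Bool) : Prop :=
  (if p.2 then (F p.1).1 else (F p.1).2) = true

/-- A potential walk of the fourientation `F` from `a` to `b`: each step uses
a direction present in `F` (so each edge is bioriented or oriented
consistently with the walk). -/
def IsPWalk (F : E → Bool × Bool) : V → List (E × Bool) → V → Prop
  | a, [], b => a = b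
  | a, p :: rest, b => G.ftail p = a ∧ present F p ∧ IsPWalk F (G.fhead p) rest b

/-- A potential path: a potential walk visiting pairwise distinct vertices. -/
def IsPPath (F : E → Bool × Bool) (a : V) (w : List (E × Bool)) (b : V) : Prop :=
  G.IsPWalk F a w b ∧ (a :: w.map G.fhead).Nodup

end MGraph

/-! Rotate the closed walk `P₁P₂` so that it starts with the oriented edge `e` and shortcut it at
repeated vertices. The result is a closed walk through `e` without repeated vertices; it uses no
edge twice, since that would make it a closed walk of length two through both directions of `e`.
Its edge set, directed along the walk, is a potential cycle: each edge is bridged by the rest of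
the walk, so no cut meets it in exactly one edge, while deleting two of its edges separates the
endpoints of either, which produces a cut meeting a given proper subset in exactly one edge. -/

namespace MGraph

variable {V E : Type} {G : MGraph V E}

variable (G) in
def Reachable (S : Set E) (a b : V) : Prop :=
  Quot.mk (G.step S) a = Quot.mk (G.step S) b

namespace Reachable

variable {S T : Set E} {a b c : V}

lemma refl (a : V) : G.Reachable S a a := rfl

lemma symm (h : G.Reachable S a b) : G.Reachable S b a := Eq.symm h

lemma trans (h₁ : G.Reachable S a b) (h₂ : G.Reachable S b c) : G.Reachable S a c :=
  Eq.trans h₁ h₂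

lemma of_step (h : G.step S a b) : G.Reachable S a b := Quot.sound h

lemma mono (hST : S ⊆ T) (h : G.Reachable S a b) : G.Reachable T a b := by
  rw [Reachable, Quot.eq] at h ⊢
  exact h.mono fun _ _ ⟨e, he, hends⟩ => ⟨e, hST he, hends⟩

lemma of_forall_reachable {S T : Set E}
    (h : ∀ e ∈ T, G.Reachable S (G.src e) (G.tgt e)) {a b : V} (hab : G.Reachable T a b) :
    G.Reachable S a b := by
  rw [Reachable, Quot.eq] at hab
  induction hab with
  | rel x y hxy =>
    obtain ⟨e, he, ⟨rfl, rfl⟩ | ⟨rfl, rfl⟩⟩ := hxy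
    exacts [h e he, (h e he).symm]
  | refl x => exact .refl x
  | symm x y _ ih => exact ih.symm
  | trans x y z _ _ ih₁ ih₂ => exact ih₁.trans ih₂

end Reachable

lemma reachable_of_mem {S : Set E} {e : E} (he : e ∈ S) : G.Reachable S (G.src e) (G.tgt e) :=
  .of_step ⟨e, he, .inl ⟨rfl, rfl⟩⟩

lemma not_reachable_of_forall_mem_iff {S : Set E} {A : Set V}
    (hA : ∀ e ∈ S, (G.src e ∈ A ↔ G.tgt e ∈ A)) {a b : V} (ha : a ∈ A) (hb : b ∉ A) :
    ¬ G.Reachable S a b := by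
  intro h
  have hlift : ∀ x y, G.step S x y → (x ∈ A) = (y ∈ A) := by
    rintro x y ⟨e, he, ⟨rfl, rfl⟩ | ⟨rfl, rfl⟩⟩
    exacts [propext (hA e he), propext (hA e he).symm]
  exact hb (cast (congrArg (Quot.lift (· ∈ A) hlift) h) ha)

lemma Reachable.insert_cases {S : Set E} {g : E} {a b : V}
    (h : G.Reachable (insert g S) a b) (hab : ¬ G.Reachable S a b) :
    (G.Reachable S a (G.src g) ∧ G.Reachable S (G.tgt g) b) ∨
      (G.Reachable S a (G.tgt g) ∧ G.Reachable S (G.src g) b) := by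
  by_contra hcases
  push Not at hcases
  let A : Set V := {x | G.Reachable S a x ∨
    (G.Reachable S a (G.src g) ∧ G.Reachable S (G.tgt g) x) ∨
    (G.Reachable S a (G.tgt g) ∧ G.Reachable S (G.src g) x)}
  have hA : ∀ x y, G.Reachable S x y → x ∈ A → y ∈ A := by
    rintro x y hxy (h | ⟨h₁, h₂⟩ | ⟨h₁, h₂⟩)
    exacts [.inl (h.trans hxy), .inr (.inl ⟨h₁, h₂.trans hxy⟩), .inr (.inr ⟨h₁, h₂.trans hxy⟩)]
  have hg : G.src g ∈ A ↔ G.tgt g ∈ A := by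
    constructor
    · rintro (h | ⟨h₁, h₂⟩ | ⟨h₁, -⟩)
      exacts [.inr (.inl ⟨h, .refl _⟩), .inl (h₁.trans h₂.symm), .inl h₁]
    · rintro (h | ⟨h₁, -⟩ | ⟨h₁, h₂⟩)
      exacts [.inr (.inr ⟨h, .refl _⟩), .inl h₁, .inl (h₁.trans h₂.symm)]
  refine not_reachable_of_forall_mem_iff (A := A) (fun e he => ?_) (.inl (.refl a)) ?_ h
  · rcases he with rfl | he
    · exact hg
    · exact ⟨hA _ _ (reachable_of_mem he), hA _ _ (reachable_of_mem he).symm⟩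
  · rintro (h | ⟨h₁, h₂⟩ | ⟨h₁, h₂⟩)
    exacts [hab h, hcases.1 h₁ h₂, hcases.2 h₁ h₂]

section Kappa

variable [Finite V]

lemma kappa_le_of_forall_reachable {S T : Set E}
    (h : ∀ e ∈ T, G.Reachable S (G.src e) (G.tgt e)) : G.kappa S ≤ G.kappa T :=
  Nat.card_le_card_of_surjective
    (Quot.lift (Quot.mk (G.step S)) fun _ _ hxy => (Reachable.of_step hxy).of_forall_reachable h)
    (Quot.ind fun x => ⟨Quot.mk _ x, rfl⟩)

lemma kappa_lt_of_not_reachable {S T : Set E} (hST : S ⊆ T) {a b : V}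
    (hT : G.Reachable T a b) (hS : ¬ G.Reachable S a b) : G.kappa T < G.kappa S := by
  let φ : Quot (G.step S) → Quot (G.step T) :=
    Quot.lift (Quot.mk (G.step T)) fun _ _ hxy => (Reachable.of_step hxy).mono hST
  have hφ : Function.Surjective φ := Quot.ind fun x => ⟨Quot.mk _ x, rfl⟩
  by_contra hle
  exact hS ((hφ.bijective_of_nat_card_le (not_lt.1 hle)).injective hT)

end Kappa

lemma IsCut.not_reachable_compl [Finite V] {C : Set E} (hC : G.IsCut C) {f : E} (hf : f ∈ C) :
    ¬ G.Reachable Cᶜ (G.src f) (G.tgt f) := by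
  intro hreach
  obtain ⟨-, hgt, hmin⟩ := hC
  have hle : G.kappa Cᶜ ≤ G.kappa (C \ {f})ᶜ := kappa_le_of_forall_reachable fun e he => by
    by_cases hef : e = f
    · exact hef ▸ hreach
    · exact reachable_of_mem fun heC => he ⟨heC, hef⟩
  rcases (C \ {f}).eq_empty_or_nonempty with hempty | hne
  · rw [hempty, Set.compl_empty] at hle
    omega
  · exact hmin _ (Set.sdiff_singleton_ssubset.2 hf) hne (hgt.trans_le hle)

/-- The cut is the boundary of the component of `src f` in a maximal edge set `M ⊇ S` that
still separates the endpoints of `f`; maximality makes every edge of the cut join the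
components of `src f` and `tgt f`, which is what minimality of the cut needs. -/
lemma exists_isCut_of_not_reachable [Finite V] [Finite E] {S : Set E} {f : E}
    (hS : ¬ G.Reachable S (G.src f) (G.tgt f)) : ∃ C, G.IsCut C ∧ f ∈ C ∧ Disjoint C S := by
  obtain ⟨M, hSM, hM⟩ :=
    Finite.exists_le_maximal (p := fun M => ¬ G.Reachable M (G.src f) (G.tgt f)) hS
  let U : Set V := {x | G.Reachable M (G.src f) x}
  let C : Set E := {e | G.crossing U e}
  have hMU : ∀ e ∈ M, (G.src e ∈ U ↔ G.tgt e ∈ U) := fun e he =>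
    ⟨fun h => h.trans (reachable_of_mem he), fun h => h.trans (reachable_of_mem he).symm⟩
  have hCM : Disjoint C M := Set.disjoint_left.2 fun e heC heM => by
    have := hMU e heM
    simp only [C, crossing, Set.mem_ofPred_eq] at heC
    tauto
  have hfC : f ∈ C := by
    have hsrc : G.src f ∈ U := .refl _
    have htgt : G.tgt f ∉ U := hM.prop
    simp only [C, crossing, Set.mem_ofPred_eq]
    tauto
  have hjoin : ∀ e ∈ C, (G.Reachable M (G.src f) (G.src e) ∧ G.Reachable M (G.tgt e) (G.tgt f)) ∨
      (G.Reachable M (G.src f) (G.tgt e) ∧ G.Reachable M (G.src e) (G.tgt f)) := fun e he =>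
    Reachable.insert_cases
      (by_contra fun h => hCM.notMem_of_mem_left he (hM.mem_of_prop_insert h)) hM.prop
  refine ⟨C, ⟨⟨f, hfC⟩, ?_, fun C' hC' _ hgt => ?_⟩, hfC, hCM.mono_right hSM⟩
  · refine kappa_lt_of_not_reachable (Set.subset_univ _) (reachable_of_mem (Set.mem_univ f))
      (not_reachable_of_forall_mem_iff (A := U) (fun e he => ?_) (.refl _) hM.prop)
    simp only [C, crossing, Set.mem_compl_iff, Set.mem_ofPred_eq] at he
    tauto
  · obtain ⟨g, hgC, hgC'⟩ := Set.exists_of_ssubset hC'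
    have hMC' : M ⊆ C'ᶜ := fun e heM heC' => hCM.notMem_of_mem_right heM (hC'.1 heC')
    have hf : G.Reachable C'ᶜ (G.src f) (G.tgt f) :=
      Reachable.mono (Set.insert_subset hgC' hMC')
        (by_contra fun h => hCM.notMem_of_mem_left hgC (hM.mem_of_prop_insert h))
    refine (kappa_le_of_forall_reachable fun e _ => ?_).not_gt hgt
    by_cases heC : e ∈ C
    · rcases hjoin e heC with ⟨h₁, h₂⟩ | ⟨h₁, h₂⟩
      · exact (h₁.mono hMC').symm.trans (hf.trans (h₂.mono hMC').symm)
      · exact (h₂.mono hMC').trans (hf.symm.trans (h₁.mono hMC'))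
    · exact reachable_of_mem fun he => heC (hC'.1 he)

lemma isCycle_of_reachable [Finite V] [Finite E] {C : Set E} (hne : C.Nonempty)
    (harc : ∀ f ∈ C, G.Reachable (C \ {f}) (G.src f) (G.tgt f))
    (hsep : ∀ f ∈ C, ∀ g ∈ C, f ≠ g → ¬ G.Reachable (C \ {f, g}) (G.src f) (G.tgt f)) :
    G.IsCycle C := by
  refine ⟨hne, fun D hD hone => ?_, fun C' hC' ⟨f, hf⟩ hcuts => ?_⟩
  · obtain ⟨f, hDC⟩ := Set.ncard_eq_one.1 hone
    have hf : f ∈ D ∩ C := hDC ▸ rfl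
    refine hD.not_reachable_compl hf.1 ((harc f hf.2).mono fun e he heD => he.2 ?_)
    rw [← hDC]
    exact ⟨heD, he.1⟩
  · obtain ⟨g, hgC, hgC'⟩ := Set.exists_of_ssubset hC'
    have hfg : f ≠ g := fun h => hgC' (h ▸ hf)
    obtain ⟨D, hD, hfD, hDC'⟩ := exists_isCut_of_not_reachable (S := C' \ {f})
      fun h => hsep f (hC'.1 hf) g hgC hfg (h.mono fun e he => ⟨hC'.1 he.1, by
        rintro (rfl | rfl)
        exacts [he.2 rfl, hgC' he.1]⟩)
    refine hcuts D hD (Set.ncard_eq_one.2 ⟨f, ?_⟩)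
    refine Set.eq_singleton_iff_unique_mem.2 ⟨⟨hfD, hf⟩, fun e he => ?_⟩
    by_contra hef
    obtain ⟨heD, heC'⟩ := he
    exact hDC'.notMem_of_mem_left heD ⟨heC', hef⟩

lemma reachable_ftail_fhead_iff {S : Set E} {q : E × Bool} :
    G.Reachable S (G.ftail q) (G.fhead q) ↔ G.Reachable S (G.src q.1) (G.tgt q.1) := by
  obtain ⟨e, _ | _⟩ := q
  exacts [⟨Reachable.symm, Reachable.symm⟩, Iff.rfl]

lemma ftail_mem_iff_fhead_mem {A : Set V} {q : E × Bool} :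
    (G.ftail q ∈ A ↔ G.fhead q ∈ A) ↔ (G.src q.1 ∈ A ↔ G.tgt q.1 ∈ A) := by
  obtain ⟨e, _ | _⟩ := q
  exacts [Iff.comm, Iff.rfl]

section Walks

variable {F : E → Bool × Bool} {a b c : V} {q : E × Bool} {w w₁ w₂ : List (E × Bool)}

lemma isPWalk_append :
    G.IsPWalk F a (w₁ ++ w₂) b ↔ ∃ c, G.IsPWalk F a w₁ c ∧ G.IsPWalk F c w₂ b := by
  induction w₁ generalizing a with
  | nil => simp [IsPWalk]
  | cons q w ih => simp [IsPWalk, ih, and_assoc]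

lemma IsPWalk.append (h₁ : G.IsPWalk F a w₁ c) (h₂ : G.IsPWalk F c w₂ b) :
    G.IsPWalk F a (w₁ ++ w₂) b :=
  isPWalk_append.2 ⟨c, h₁, h₂⟩

lemma IsPWalk.present_of_mem (hw : G.IsPWalk F a w b) (hq : q ∈ w) : present F q := by
  induction w generalizing a with
  | nil => cases hq
  | cons r w ih =>
    rcases List.mem_cons.1 hq with rfl | hq
    exacts [hw.2.1, ih hw.2.2 hq]

lemma IsPWalk.map_ftail_append (hw : G.IsPWalk F a w b) :
    w.map G.ftail ++ [b] = a :: w.map G.fhead := by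
  induction w generalizing a with
  | nil => simp [show a = b from hw]
  | cons q w ih => simp [← hw.1, ih hw.2.2]

lemma IsPWalk.ftail_mem (hw : G.IsPWalk F a w b) (hq : q ∈ w) : G.ftail q ∈ a :: w.map G.fhead :=
  hw.map_ftail_append ▸ List.mem_append_left _ (List.mem_map_of_mem hq)

lemma IsPWalk.end_mem (hw : G.IsPWalk F a w b) : b ∈ a :: w.map G.fhead :=
  hw.map_ftail_append ▸ List.mem_append_right _ (List.mem_singleton_self b)

lemma IsPWalk.end_mem_map_fhead (hw : G.IsPWalk F a w b) (hne : w ≠ []) : b ∈ w.map G.fhead := by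
  induction w generalizing a with
  | nil => exact absurd rfl hne
  | cons q w ih =>
    rcases eq_or_ne w [] with rfl | hw'
    · exact List.mem_singleton.2 hw.2.2.symm
    · exact List.mem_cons_of_mem _ (ih hw.2.2 hw')

lemma IsPWalk.perm_map_fhead (hw : G.IsPWalk F a w a) : (w.map G.fhead).Perm (w.map G.ftail) :=
  (List.perm_cons a).1 (hw.map_ftail_append ▸ List.perm_append_singleton a (w.map G.ftail))

lemma IsPWalk.reachable {S : Set E} (hw : G.IsPWalk F a w b) (hS : ∀ q ∈ w, q.1 ∈ S) :
    G.Reachable S a b := by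
  induction w generalizing a with
  | nil => exact hw ▸ .refl a
  | cons q w ih =>
    obtain ⟨rfl, -, hw⟩ := hw
    exact (reachable_ftail_fhead_iff.2 (reachable_of_mem (hS q List.mem_cons_self))).trans
      (ih hw fun r hr => hS r (List.mem_cons_of_mem q hr))

lemma IsPWalk.rotate (hw : G.IsPWalk F a (w₁ ++ q :: w₂) a) :
    G.IsPWalk F (G.fhead q) (w₂ ++ w₁) (G.ftail q) ∧ present F q := by
  obtain ⟨c, h₁, hq, hpres, h₂⟩ := isPWalk_append.1 hw
  rw [hq]
  exact ⟨h₂.append h₁, hpres⟩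

lemma IsPPath.exists_suffix (hw : G.IsPPath F c w b) (ha : a ∈ c :: w.map G.fhead) :
    ∃ w', w' <:+ w ∧ G.IsPPath F a w' b := by
  induction w generalizing c with
  | nil => exact ⟨[], List.suffix_refl _, List.mem_singleton.1 ha ▸ hw⟩
  | cons q w ih =>
    rcases List.mem_cons.1 ha with rfl | ha
    · exact ⟨_, List.suffix_refl _, hw⟩
    · obtain ⟨w', hsuf, hw'⟩ := ih ⟨hw.1.2.2, hw.2.of_cons⟩ ha
      exact ⟨w', hsuf.trans (List.suffix_cons q w), hw'⟩

lemma IsPWalk.exists_isPPath (hw : G.IsPWalk F a w b) : ∃ w', G.IsPPath F a w' b ∧ w' ⊆ w := by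
  induction w generalizing a with
  | nil => exact ⟨[], ⟨hw, List.nodup_singleton a⟩, List.Subset.refl _⟩
  | cons q w ih =>
    obtain ⟨hq, hpres, hw⟩ := hw
    obtain ⟨w', hw', hsub⟩ := ih hw
    by_cases ha : a ∈ G.fhead q :: w'.map G.fhead
    · obtain ⟨w'', hsuf, hw''⟩ := hw'.exists_suffix ha
      exact ⟨w'', hw'', fun p hp => List.mem_cons_of_mem q (hsub (hsuf.subset hp))⟩
    · exact ⟨q :: w', ⟨⟨hq, hpres, hw'.1⟩, List.nodup_cons.2 ⟨ha, hw'.2⟩⟩,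
        List.cons_subset_cons q hsub⟩

lemma IsPPath.exists_separating {r : E × Bool} (hw : G.IsPPath F a w b) (hr : r ∈ w) :
    ∃ A : Set V, a ∈ A ∧ b ∉ A ∧ ∀ p ∈ w, p ≠ r → (G.ftail p ∈ A ↔ G.fhead p ∈ A) := by
  obtain ⟨w₁, w₂, rfl⟩ := List.append_of_mem hr
  obtain ⟨c, hw₁, -, -, hw₂⟩ := isPWalk_append.1 hw.1
  have hdisj := (List.nodup_append.1 (by simpa using hw.2 :
    ((a :: w₁.map G.fhead) ++ (G.fhead r :: w₂.map G.fhead)).Nodup)).2.2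
  refine ⟨{x | x ∈ a :: w₁.map G.fhead}, List.mem_cons_self,
    fun hb => hdisj _ hb _ hw₂.end_mem rfl, fun p hp hpr => ?_⟩
  rcases List.mem_append.1 hp with hp | hp
  · exact iff_of_true (hw₁.ftail_mem hp) (List.mem_cons_of_mem _ (List.mem_map_of_mem hp))
  · have hp : p ∈ w₂ := (List.mem_cons.1 hp).resolve_left hpr
    exact iff_of_false (fun h => hdisj _ h _ (hw₂.ftail_mem hp) rfl)
      (fun h => hdisj _ h _ (List.mem_cons_of_mem _ (List.mem_map_of_mem hp)) rfl)

lemma IsPPath.eq_singleton {r : E × Bool} (hw : G.IsPPath F a w b) (hr : r ∈ w)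
    (hrt : G.ftail r = a) (hrh : G.fhead r = b) : w = [r] := by
  obtain ⟨w₁, w₂, rfl⟩ := List.append_of_mem hr
  obtain ⟨c, hw₁, hc, -, hw₂⟩ := isPWalk_append.1 hw.1
  have hnd := hw.2
  simp only [List.map_append, List.map_cons, List.nodup_cons, List.mem_append, List.mem_cons,
    List.nodup_append] at hnd
  have h₁ : w₁ = [] := by
    by_contra hne
    exact hnd.1 (.inl (hrt ▸ hc ▸ hw₁.end_mem_map_fhead hne))
  have h₂ : w₂ = [] := by
    by_contra hne
    exact hnd.2.2.1.1 (hrh ▸ hw₂.end_mem_map_fhead hne)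
  simp [h₁, h₂]

variable (G) in
def IsClosedPPath (F : E → Bool × Bool) (a : V) (l : List (E × Bool)) : Prop :=
  G.IsPWalk F a l a ∧ (l.map G.ftail).Nodup

lemma IsPPath.isClosedPPath_cons (hw : G.IsPPath F (G.fhead q) w (G.ftail q)) (hq : present F q) :
    G.IsClosedPPath F (G.ftail q) (q :: w) :=
  ⟨⟨rfl, hq, hw.1⟩, (List.perm_append_singleton _ _).nodup_iff.1 (hw.1.map_ftail_append ▸ hw.2)⟩

lemma IsPWalk.exists_isClosedPPath (hw : G.IsPWalk F a w a) (hq : q ∈ w) :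
    ∃ w', G.IsClosedPPath F (G.ftail q) (q :: w') ∧ w' ⊆ w := by
  obtain ⟨w₁, w₂, rfl⟩ := List.append_of_mem hq
  obtain ⟨hrot, hpres⟩ := hw.rotate
  obtain ⟨w', hw', hsub⟩ := hrot.exists_isPPath
  refine ⟨w', hw'.isClosedPPath_cons hpres, fun p hp => ?_⟩
  have := hsub hp
  simp only [List.mem_append, List.mem_cons] at this ⊢
  tauto

lemma IsClosedPPath.exists_perm_cons (hl : G.IsClosedPPath F a w) (hq : q ∈ w) :
    ∃ w', (q :: w').Perm w ∧ G.IsPPath F (G.fhead q) w' (G.ftail q) := by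
  obtain ⟨w₁, w₂, rfl⟩ := List.append_of_mem hq
  have hperm : (q :: (w₂ ++ w₁)).Perm (w₁ ++ q :: w₂) :=
    (List.perm_append_comm.cons q).trans List.perm_middle.symm
  obtain ⟨hrot, -⟩ := hl.1.rotate
  refine ⟨w₂ ++ w₁, hperm, hrot, ?_⟩
  rw [← hrot.map_ftail_append]
  exact (List.perm_append_singleton _ _).nodup_iff.2 ((hperm.map _).nodup_iff.2 hl.2)

/-- Only a closed path of length two can use an edge twice, and then the edge is
bioriented. -/
lemma IsClosedPPath.nodup_map_fst (hl : G.IsClosedPPath F a w) {p : E × Bool} (hp : p ∈ w)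
    (horient : (F p.1).1 ≠ (F p.1).2) : (w.map Prod.fst).Nodup := by
  refine List.Nodup.map_on (fun q hq r hr hqr => by_contra fun hne => ?_) (hl.2.of_map _)
  obtain ⟨w', hperm, hw'⟩ := hl.exists_perm_cons hq
  have hrw : r ∈ w' := (List.mem_cons.1 (hperm.mem_iff.2 hr)).resolve_left (Ne.symm hne)
  obtain ⟨e, d⟩ := q
  obtain ⟨e', d'⟩ := r
  obtain rfl : e = e' := hqr
  obtain rfl : d' = !d := by cases d <;> cases d' <;> simp_all
  have hw'r : w' = [(e, !d)] := hw'.eq_singleton hrw (by cases d <;> rfl) (by cases d <;> rfl)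
  have hpe : p.1 = e := by
    have := hperm.mem_iff.2 hp
    simp only [hw'r, List.mem_cons, List.not_mem_nil, or_false] at this
    rcases this with rfl | rfl <;> rfl
  have hq := hl.1.present_of_mem hq
  have hr := hl.1.present_of_mem hr
  rw [hpe] at horient
  cases d <;> simp_all [present]

end Walks

def edgesOf (w : List (E × Bool)) : Set E := {e | ∃ d, (e, d) ∈ w}

/-- The direction in which `w` traverses `e` (well defined when `w` uses `e` only once). -/
noncomputable def dirOf (w : List (E × Bool)) (e : E) : Bool := decide ((e, true) ∈ w)

section EdgesOf

variable {w : List (E × Bool)}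

lemma mem_dirOf {e : E} (he : e ∈ edgesOf w) : (e, dirOf w e) ∈ w := by
  obtain ⟨d, hd⟩ := he
  by_cases h : (e, true) ∈ w
  · simp [dirOf, h]
  · cases d
    · simpa [dirOf, h] using hd
    · exact absurd hd h

lemma dirOf_eq (hw : (w.map Prod.fst).Nodup) {q : E × Bool} (hq : q ∈ w) : dirOf w q.1 = q.2 :=
  congrArg Prod.snd (List.inj_on_of_nodup_map hw (mem_dirOf ⟨q.2, hq⟩) hq rfl)

lemma ncard_edgesOf_filter (hw : (w.map Prod.fst).Nodup) (φ : E × Bool → V) (x : V) :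
    {e ∈ edgesOf w | φ (e, dirOf w e) = x}.ncard = (w.map φ).count x := by
  have hset : {e ∈ edgesOf w | φ (e, dirOf w e) = x} =
      ↑((w.filter (φ · = x)).map Prod.fst).toFinset := by
    ext e
    simp only [Set.mem_ofPred_eq, List.coe_toFinset, List.mem_map, List.mem_filter,
      decide_eq_true_eq]
    constructor
    · rintro ⟨he, hx⟩
      exact ⟨_, ⟨mem_dirOf he, hx⟩, rfl⟩
    · rintro ⟨q, ⟨hq, hx⟩, rfl⟩
      exact ⟨⟨q.2, hq⟩, by rwa [dirOf_eq hw hq]⟩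
  rw [hset, Set.ncard_coe_finset, List.toFinset_card_of_nodup
    (hw.sublist ((List.filter_sublist).map _)), List.length_map, List.count_eq_countP,
    List.countP_map, List.countP_eq_length_filter]
  rfl

end EdgesOf

section ClosedPPath

variable {F : E → Bool × Bool} {a : V} {w : List (E × Bool)}

lemma IsClosedPPath.isCycle [Finite V] [Finite E] (hl : G.IsClosedPPath F a w) (hne : w ≠ [])
    (hw : (w.map Prod.fst).Nodup) : G.IsCycle (edgesOf w) := by
  obtain ⟨p, hp⟩ := List.exists_mem_of_ne_nil w hne
  refine isCycle_of_reachable ⟨p.1, p.2, hp⟩ (fun f hf => ?_) (fun f hf g hg hfg => ?_)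
  · obtain ⟨w', hperm, hw'⟩ := hl.exists_perm_cons (mem_dirOf hf)
    have hf' : f ∉ w'.map Prod.fst := (List.nodup_cons.1 ((hperm.map _).nodup_iff.2 hw)).1
    refine reachable_ftail_fhead_iff.1 (hw'.1.reachable fun q hq => ?_).symm
    exact ⟨⟨q.2, hperm.subset (List.mem_cons_of_mem _ hq)⟩,
      fun hqf => hf' (List.mem_map.2 ⟨q, hq, hqf⟩)⟩
  · obtain ⟨w', hperm, hw'⟩ := hl.exists_perm_cons (mem_dirOf hf)
    have hmem : ∀ {e}, e ∈ edgesOf w → e ≠ f → (e, dirOf w e) ∈ w' := fun he hef =>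
      (List.mem_cons.1 (hperm.mem_iff.2 (mem_dirOf he))).resolve_left
        fun h => hef (congrArg Prod.fst h)
    obtain ⟨A, hA, hA', hAw'⟩ := hw'.exists_separating (hmem hg hfg.symm)
    refine fun h => not_reachable_of_forall_mem_iff (fun e he => ?_) hA hA'
      (reachable_ftail_fhead_iff.2 h).symm
    obtain ⟨he, hefg⟩ := he
    simp only [Set.mem_insert_iff, Set.mem_singleton_iff, not_or] at hefg
    exact ftail_mem_iff_fhead_mem.1 (hAw' _ (hmem he hefg.1) fun h => hefg.2 (congrArg Prod.fst h))

lemma IsClosedPPath.potCycle [Finite V] [Finite E] (hl : G.IsClosedPPath F a w) (hne : w ≠ [])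
    (hw : (w.map Prod.fst).Nodup) : G.PotCycle F (edgesOf w) (dirOf w) :=
  ⟨hl.isCycle hne hw, fun x => (ncard_edgesOf_filter hw G.fhead x).trans
    ((hl.1.perm_map_fhead.count_eq x).trans (ncard_edgesOf_filter hw G.ftail x).symm),
    fun _ hf => hl.1.present_of_mem (mem_dirOf hf)⟩

end ClosedPPath

end MGraph

theorem potential_path_lemma_general {V E : Type} [Fintype V] [Fintype E]
    (G : MGraph V E) (F : E → Bool × Bool) (u v : V)
    (P₁ P₂ : List (E × Bool))
    (h1 : G.IsPPath F v P₁ u) (h2 : G.IsPPath F u P₂ v)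
    (e : E) (he : (F e).1 ≠ (F e).2) (happ : ∃ d : Bool, (e, d) ∈ P₁ ++ P₂) :
    ∃ (C : Set E) (dir : E → Bool), G.PotCycle F C dir ∧ e ∈ C ∧
      (∀ f ∈ C, ∃ d : Bool, (f, d) ∈ P₁ ++ P₂) ∧
      (∀ f ∈ C, F f = (true, true) → (f, dir f) ∈ P₁ ++ P₂) := by
  obtain ⟨d, hd⟩ := happ
  obtain ⟨w, hl, hsub⟩ := (h1.1.append h2.1).exists_isClosedPPath hd
  have hw := hl.nodup_map_fst List.mem_cons_self he
  have hsub' : (e, d) :: w ⊆ P₁ ++ P₂ := List.cons_subset.2 ⟨hd, hsub⟩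
  exact ⟨MGraph.edgesOf ((e, d) :: w), MGraph.dirOf ((e, d) :: w),
    hl.potCycle (List.cons_ne_nil _ _) hw, ⟨d, List.mem_cons_self⟩,
    fun f hf => ⟨_, hsub' (MGraph.mem_dirOf hf)⟩, fun f hf _ => hsub' (MGraph.mem_dirOf hf)⟩

/-- if `P₁` is a potential path of a fourientation `O` from `v`
to `u` and `P₂` a potential path from `u` to `v` (`u ≠ v`), then every oriented
edge appearing in the closed walk `P₁P₂` lies on a potential cycle `Cy ⊆ P₁P₂`
of `O`; moreover every bioriented edge of `Cy` is traversed by `Cy` in a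
direction consistent with `P₁` or `P₂`. -/
theorem potential_path_lemma {V E : Type} [Fintype V] [Fintype E]
    (G : MGraph V E) (F : E → Bool × Bool) (u v : V) (huv : u ≠ v)
    (P₁ P₂ : List (E × Bool))
    (h1 : G.IsPPath F v P₁ u) (h2 : G.IsPPath F u P₂ v)
    (e : E) (he : (F e).1 ≠ (F e).2) (happ : ∃ d : Bool, (e, d) ∈ P₁ ++ P₂) :
    ∃ (C : Set E) (dir : E → Bool), G.PotCycle F C dir ∧ e ∈ C ∧
      (∀ f ∈ C, ∃ d : Bool, (f, d) ∈ P₁ ++ P₂) ∧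
      (∀ f ∈ C, F f = (true, true) → (f, dir f) ∈ P₁ ++ P₂) :=
  potential_path_lemma_general G F u v P₁ P₂ h1 h2 e he happ
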